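/- Let P, Q be real polynomials and suppose the function F(λ) = P(λ) + √(1−λ²)·Q(λ) is constant on the interval [0,1). Then P is a constant polynomial and Q is the zero polynomial. -/

import Mathlib

/-! Squaring `P + √(1 - λ²) Q = c` gives the polynomial identity `(c - P)² = (1 - X²) Q²`
on infinitely many points, hence in `ℝ[X]`. Comparing leading coefficients, the left side has
a nonnegative one while the right side has `-lc(Q)² < 0` unless `Q = 0`; then `(c - P)² = 0`. -/

open Polynomial

theorem Polynomial.leadingCoeff_one_sub_X_sq {R : Type*} [Ring R] :
    (1 - X ^ 2 : R[X]).leadingCoeff = -1 := by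
  rw [← neg_sub, leadingCoeff_neg, ← C_1, leadingCoeff_X_pow_sub_C two_pos]

theorem Polynomial.eq_zero_of_sq_eq_one_sub_X_sq_mul_sq {R : Type*} [CommRing R] [LinearOrder R]
    [IsStrictOrderedRing R] {f q : R[X]} (h : f ^ 2 = (1 - X ^ 2) * q ^ 2) : q = 0 := by
  by_contra hq
  have hlc := congrArg leadingCoeff h
  rw [leadingCoeff_mul, leadingCoeff_pow, leadingCoeff_pow, leadingCoeff_one_sub_X_sq] at hlc
  have hq_lc : 0 < q.leadingCoeff ^ 2 := pow_two_pos_of_ne_zero (leadingCoeff_ne_zero.mpr hq)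
  nlinarith [sq_nonneg f.leadingCoeff]

theorem Polynomial.sq_sub_eq_one_sub_X_sq_mul_sq_of_eval {P Q : ℝ[X]} {c : ℝ}
    (h : ∀ lam ∈ Set.Ico (0:ℝ) 1, P.eval lam + √(1 - lam ^ 2) * Q.eval lam = c) :
    (C c - P) ^ 2 = (1 - X ^ 2) * Q ^ 2 := by
  refine eq_of_infinite_eval_eq _ _ ((Set.Ico_infinite zero_lt_one).mono fun lam hlam => ?_)
  obtain ⟨h0, h1⟩ := hlam
  have hsqrt : √(1 - lam ^ 2) ^ 2 = 1 - lam ^ 2 := Real.sq_sqrt (by nlinarith)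
  have hsq : c - P.eval lam = √(1 - lam ^ 2) * Q.eval lam := by linarith [h lam ⟨h0, h1⟩]
  simp only [Set.mem_ofPred_eq, eval_pow, eval_mul, eval_sub, eval_one, eval_C, eval_X]
  rw [hsq, mul_pow, hsqrt]

theorem stmt4 (P Q : Polynomial ℝ) (c : ℝ)
    (h : ∀ lam ∈ Set.Ico (0:ℝ) 1,
      P.eval lam + Real.sqrt (1 - lam ^ 2) * Q.eval lam = c) :
    (∃ k : ℝ, P = Polynomial.C k) ∧ Q = 0 := by
  have key := sq_sub_eq_one_sub_X_sq_mul_sq_of_eval h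
  have hQ : Q = 0 := eq_zero_of_sq_eq_one_sub_X_sq_mul_sq key
  have hP : (C c - P) ^ 2 = 0 := by rw [key, hQ]; ring
  exact ⟨⟨c, (sub_eq_zero.mp (pow_eq_zero_iff two_ne_zero |>.mp hP)).symm⟩, hQ⟩
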